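/- Fix λ_rs, λ_ds > 0, a target rate R > 0, and a fraction b ∈ (0, 1], and for P > 0 define P_relay(P) = 1 − e^{−λ_rs·(2^R − 1)/(b·P)} − (λ_rs/(λ_rs + λ_ds))·(1 − e^{−(λ_rs + λ_ds)·(2^R − 1)/(b·P)}). Then lim_{P → ∞} P²·P_relay(P) = λ_ds·λ_rs·(2^R − 1)²/(2·b²); in particular the relay outage probability decays like 1/P² at high SNR, i.e. achieves diversity order 2. -/

import Mathlib

/-!
With `κ = 2 ^ R - 1`, `a = λ_rs κ / b` and `d = (λ_rs + λ_ds) κ / b`, the outage probability is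
`(1 - e^{-a/P}) - (a/d) (1 - e^{-d/P})`. Expanding `1 - e^{-k/P} = k/P - k²/(2P²) + O(P⁻³)`,
the first-order terms cancel because the weight is `a/d`, and the second-order terms leave
`(a d - a²) / (2P²) = λ_rs λ_ds κ² / (2 b² P²)`.
-/

open Filter Real Topology

lemma abs_exp_sub_one_sub_id_sub_sq_div_two_le {x : ℝ} (hx : |x| ≤ 1) :
    |exp x - 1 - x - x ^ 2 / 2| ≤ |x| ^ 3 := by
  have hbound := Real.exp_bound hx (n := 3) (by norm_num)
  have htaylor : ∑ m ∈ Finset.range 3, x ^ m / m.factorial = 1 + x + x ^ 2 / 2 := by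
    simp [Finset.sum_range_succ, Nat.factorial]
  rw [htaylor] at hbound
  calc |exp x - 1 - x - x ^ 2 / 2| = |exp x - (1 + x + x ^ 2 / 2)| := by ring_nf
    _ ≤ |x| ^ 3 * ((3 : ℕ).succ / ((3 : ℕ).factorial * 3)) := hbound
    _ ≤ |x| ^ 3 := by
      apply mul_le_of_le_one_right (by positivity)
      norm_num [Nat.factorial]

lemma tendsto_sq_mul_one_sub_exp_neg_div_sub_mul (k : ℝ) :
    Tendsto (fun x : ℝ => x ^ 2 * (1 - exp (-(k / x))) - k * x) atTop (𝓝 (-(k ^ 2 / 2))) := by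
  rw [← tendsto_sub_nhds_zero_iff]
  have hdecay : Tendsto (fun x : ℝ => |k| ^ 3 / x) atTop (𝓝 0) :=
    tendsto_const_nhds.div_atTop tendsto_id
  refine squeeze_zero_norm' ?_ hdecay
  filter_upwards [eventually_ge_atTop (max 1 |k|)] with x hx
  have hx0 : 0 < x := one_pos.trans_le ((le_max_left _ _).trans hx)
  have hkx : |-(k / x)| ≤ 1 := by
    rw [abs_neg, abs_div, abs_of_pos hx0, div_le_one hx0]
    exact (le_max_right _ _).trans hx
  have hremainder := abs_exp_sub_one_sub_id_sub_sq_div_two_le hkx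
  calc ‖x ^ 2 * (1 - exp (-(k / x))) - k * x - -(k ^ 2 / 2)‖
      = x ^ 2 * |exp (-(k / x)) - 1 - -(k / x) - (-(k / x)) ^ 2 / 2| := by
        have hcompare : x ^ 2 * (1 - exp (-(k / x))) - k * x - -(k ^ 2 / 2)
            = -(x ^ 2 * (exp (-(k / x)) - 1 - -(k / x) - (-(k / x)) ^ 2 / 2)) := by
          field_simp
          ring
        rw [hcompare, norm_neg, norm_mul, Real.norm_eq_abs, Real.norm_eq_abs,
          abs_of_pos (pow_pos hx0 2)]
    _ ≤ x ^ 2 * |-(k / x)| ^ 3 := by gcongr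
    _ = |k| ^ 3 / x := by
        rw [abs_neg, abs_div, abs_of_pos hx0]
        field_simp

theorem relay_diversity_order_two_general (lrs lds R b : ℝ)
    (hlrs : 0 < lrs) (hlds : 0 < lds) :
    Filter.Tendsto
      (fun P : ℝ => P ^ 2 *
        (1 - Real.exp (-(lrs * ((2 : ℝ) ^ R - 1) / (b * P)))
          - lrs / (lrs + lds)
            * (1 - Real.exp (-((lrs + lds) * ((2 : ℝ) ^ R - 1) / (b * P))))))
      Filter.atTop
      (nhds (lds * lrs * ((2 : ℝ) ^ R - 1) ^ 2 / (2 * b ^ 2))) := by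
  set a := lrs * ((2 : ℝ) ^ R - 1) / b
  set d := (lrs + lds) * ((2 : ℝ) ^ R - 1) / b
  have hsum : lrs + lds ≠ 0 := (add_pos hlrs hlds).ne'
  have hweight : lrs / (lrs + lds) * d = a := by
    simp only [a, d]
    field_simp
  have hexpand := (tendsto_sq_mul_one_sub_exp_neg_div_sub_mul a).sub
    ((tendsto_sq_mul_one_sub_exp_neg_div_sub_mul d).const_mul (lrs / (lrs + lds)))
  convert hexpand using 1
  · ext P
    rw [← div_div, ← div_div]
    linear_combination -P * hweight
  · congr 1
    simp only [a, d]
    field_simp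
    ring

/-- the relay outage probability
`P_relay(P) = 1 - e^{-λ_rs (2^R - 1)/(bP)} - (λ_rs/(λ_rs+λ_ds))(1 - e^{-(λ_rs+λ_ds)(2^R - 1)/(bP)})`
with `β_s = bP`, `b ∈ (0, 1]`, satisfies
`P² P_relay(P) → λ_ds λ_rs (2^R - 1)²/(2 b²)` as `P → ∞`: diversity order 2. -/
theorem relay_diversity_order_two (lrs lds R b : ℝ)
    (hlrs : 0 < lrs) (hlds : 0 < lds) (hR : 0 < R) (hb : 0 < b) (hb1 : b ≤ 1) :
    Filter.Tendsto
      (fun P : ℝ => P ^ 2 *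
        (1 - Real.exp (-(lrs * ((2 : ℝ) ^ R - 1) / (b * P)))
          - lrs / (lrs + lds)
            * (1 - Real.exp (-((lrs + lds) * ((2 : ℝ) ^ R - 1) / (b * P))))))
      Filter.atTop
      (nhds (lds * lrs * ((2 : ℝ) ^ R - 1) ^ 2 / (2 * b ^ 2))) :=
  relay_diversity_order_two_general lrs lds R b hlrs hlds
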